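/- arXiv:2103.04080 — 7 statements merged into one kernel-verified Lean document; each statement's English description precedes it below -/
import Mathlib

section
/- Let M be a compact metric space and Φ a semiflow on M such that through every point of M there passes a full trajectory. Let R ⊆ M be a nonempty compact invariant set and suppose there exists an open neighborhood W of R in M such that for every x ∈ W∖R and every full trajectory γ through x (γ(0)=x), one has α(γ) ⊆ R and ω(γ) ∩ W = ∅. Let A be the maximal invariant subset of M∖W (i.e., A is invariant, A ⊆ M∖W, and A contains every invariant subset of M∖W), and assume A is nonempty. Then A is an attractor of Φ in M and R = {x ∈ M : ω(x) ∩ A = ∅}; that is, (A, R) is an attractor-repeller pair in M. -/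
/-!
An orbit starting off `R` that enters `W` must cross `W \ R`, since `R` is closed, and after
that it leaves `W` for good. So the ω-limit set of a point off `R` is an invariant set outside
`W`, hence lies in `A`; in particular no orbit starting off `R` ever reaches `R`.

Let `K` be the complement of a small open thickening of `R` inside `W`. Every orbit from `K`
returns to the interior of `K`, as its ω-limit set lies in `A`. Hence `ω(K)` misses `R`: cut the
orbit segments converging to a point of `R` at their last visit to `K`; the remaining pieces
have bounded length, so in the limit some orbit from `K` would reach `R`. And `ω(K)` misses `W`:
through each of its points passes a full trajectory inside `ω(K)`, whose α-limit set would meet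
`R`. So `ω(K) = A`, which makes `A` compact and attracting.
-/

open Metric Set Filter Topology omegaLimit

section Semiflow

variable {α M : Type*}

structure IsSemiflow [TopologicalSpace M] (Φ : ℝ → M → M) : Prop where
  continuous : Continuous fun p : ℝ × M => Φ p.1 p.2
  map_zero : ∀ x, Φ 0 x = x
  map_add : ∀ t s : ℝ, 0 ≤ t → 0 ≤ s → ∀ x, Φ (t + s) x = Φ t (Φ s x)

def IsInvariantSet (Φ : ℝ → M → M) (S : Set M) : Prop :=
  ∀ t : ℝ, 0 ≤ t → Φ t '' S = S

def IsFullTrajectory [TopologicalSpace M] (Φ : ℝ → M → M) (γ : ℝ → M) : Prop :=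
  Continuous γ ∧ ∀ t s : ℝ, s ≤ t → γ t = Φ (t - s) (γ s)

def trajectoryAlphaLimit [TopologicalSpace M] (γ : ℝ → M) : Set M :=
  {y | ∃ u : ℕ → ℝ, Tendsto u atTop atBot ∧ Tendsto (fun n => γ (u n)) atTop (𝓝 y)}

def trajectoryOmegaLimit [TopologicalSpace M] (γ : ℝ → M) : Set M :=
  {y | ∃ u : ℕ → ℝ, Tendsto u atTop atTop ∧ Tendsto (fun n => γ (u n)) atTop (𝓝 y)}

section OmegaLimit

variable [TopologicalSpace M] {ϕ : ℝ → α → M} {s : Set α}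

theorem omegaLimit_singleton_eq_biInter (ϕ : ℝ → α → M) (x : α) :
    ω⁺ ϕ {x} = ⋂ T ∈ Ici (0 : ℝ), closure {y | ∃ t ≥ T, y = ϕ t x} := by
  have himage : ∀ T : ℝ, image2 ϕ (Ici T) {x} = {y | ∃ t ≥ T, y = ϕ t x} := fun T => by
    ext y
    simp [eq_comm]
  refine Subset.antisymm (subset_iInter₂ fun T _ => himage T ▸
    omegaLimit_subset_closure_image2 _ _ _ (Ici_mem_atTop T)) (subset_iInter₂ fun u hu => ?_)
  obtain ⟨T, hT⟩ := mem_atTop_sets.1 hu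
  refine (biInter_subset_of_mem (mem_Ici.2 (le_max_right T 0))).trans (closure_mono ?_)
  rw [← himage]
  exact image2_subset (fun t ht => hT t (le_of_max_le_left ht)) Subset.rfl

theorem omegaLimit_subset_of_eventually_mapsTo {C : Set M} (hC : IsClosed C)
    (h : ∀ᶠ t in atTop, MapsTo (ϕ t) s C) : ω⁺ ϕ s ⊆ C := by
  obtain ⟨u, hu, huC⟩ := h.exists_mem
  exact (omegaLimit_subset_closure_image2 _ _ _ hu).trans
    (closure_minimal (image2_subset_iff.2 fun t ht x hx => huC t ht hx) hC)

theorem omegaLimit_singleton_subset_of_mapsTo {Φ : ℝ → M → M} {R : Set M} (hR : IsClosed R)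
    (hRfwd : ∀ t, 0 ≤ t → MapsTo (Φ t) R R) {x : M} (hx : x ∈ R) : ω⁺ Φ {x} ⊆ R :=
  omegaLimit_subset_of_eventually_mapsTo hR
    ((eventually_ge_atTop 0).mono fun t ht => mapsTo_singleton.2 (hRfwd t ht hx))

theorem mem_omegaLimit_of_tendsto {u : ℕ → ℝ} {x : ℕ → α} {y : M}
    (hu : Tendsto u atTop atTop) (hx : ∀ n, x n ∈ s)
    (hy : Tendsto (fun n => ϕ (u n) (x n)) atTop (𝓝 y)) : y ∈ ω⁺ ϕ s :=
  mem_iInter₂.2 fun _ hv =>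
    mem_closure_of_tendsto hy (Eventually.mono (hu hv) fun n hn => mem_image2_of_mem hn (hx n))

end OmegaLimit

theorem IsInvariantSet.subset_omegaLimit [TopologicalSpace M] {Φ : ℝ → M → M} {S : Set M}
    (hS : IsInvariantSet Φ S) : S ⊆ ω⁺ Φ S := by
  intro a ha
  refine mem_iInter₂.2 fun u hu => subset_closure ?_
  obtain ⟨T, hT⟩ := mem_atTop_sets.1 hu
  obtain ⟨b, hb, rfl⟩ : a ∈ Φ (max T 0) '' S := (hS _ (le_max_right T 0)).superset ha
  exact mem_image2_of_mem (hT _ (le_max_left T 0)) hb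

theorem IsInvariantSet.exists_backward_orbit {Φ : ℝ → M → M} {S : Set M}
    (hS : IsInvariantSet Φ S) {y : M} (hy : y ∈ S) :
    ∃ z : ℕ → M, z 0 = y ∧ (∀ m, z m ∈ S) ∧ ∀ m, Φ 1 (z (m + 1)) = z m := by
  have hpre : ∀ p ∈ S, ∃ q ∈ S, Φ 1 q = p := fun p hp => (hS 1 zero_le_one).superset hp
  choose! pre hpreS hpre using hpre
  have hzS : ∀ m, pre^[m] y ∈ S := fun m => by
    induction m with
    | zero => exact hy
    | succ m ih => rw [Function.iterate_succ_apply']; exact hpreS _ ih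
  refine ⟨fun m => pre^[m] y, rfl, hzS, fun m => ?_⟩
  show Φ 1 (pre^[m + 1] y) = pre^[m] y
  rw [Function.iterate_succ_apply']
  exact hpre _ (hzS m)

theorem exists_mem_Icc_mem_diff [TopologicalSpace M] {f : ℝ → M} (hf : Continuous f)
    {R W : Set M} (hW : IsOpen W) (hR : IsClosed R) (hRW : R ⊆ W) {a b : ℝ} (hab : a ≤ b)
    (ha : f a ∉ R) (hb : f b ∈ W) : ∃ s ∈ Icc a b, f s ∈ W \ R := by
  by_cases haW : f a ∈ W
  · exact ⟨a, left_mem_Icc.2 hab, haW, ha⟩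
  obtain ⟨c, ⟨hc, hcW⟩, hcmax⟩ := (isCompact_Icc.inter_right
    (hW.isClosed_compl.preimage hf)).exists_isGreatest ⟨a, left_mem_Icc.2 hab, haW⟩
  have hcb : c ≠ b := fun h => hcW (h ▸ hb)
  by_contra hno
  -- `c` is the last time in `Wᶜ`; afterwards the path is in `W`, hence (by `hno`) in `R`
  have hR' : f '' Ioc c b ⊆ R := by
    rintro _ ⟨s, hs, rfl⟩
    have hsIcc : s ∈ Icc a b := ⟨hc.1.trans hs.1.le, hs.2⟩
    have hsW : f s ∈ W := by_contra fun h => not_le.2 hs.1 (hcmax ⟨hsIcc, h⟩)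
    exact by_contra fun hsR => hno ⟨s, hsIcc, hsW, hsR⟩
  have hcR : f c ∈ closure (f '' Ioc c b) :=
    hf.continuousWithinAt.mem_closure_image <| by
      rw [closure_Ioc hcb]
      exact left_mem_Icc.2 hc.2
  exact hcW (hRW (hR.closure_subset_iff.2 hR' hcR))

section Trajectory

variable [MetricSpace M]

theorem exists_seq_of_mem_omegaLimit {ϕ : ℝ → α → M} {s : Set α} {y : M}
    (hy : y ∈ ω⁺ ϕ s) :
    ∃ (u : ℕ → ℝ) (x : ℕ → α), Tendsto u atTop atTop ∧ (∀ n, 0 ≤ u n) ∧ (∀ n, x n ∈ s) ∧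
      Tendsto (fun n => ϕ (u n) (x n)) atTop (𝓝 y) := by
  have h : ∀ n : ℕ, ∃ t ≥ (n : ℝ), ∃ x ∈ s, dist (ϕ t x) y < 1 / (n + 1) := fun n => by
    obtain ⟨_, ⟨t, ht, x, hx, rfl⟩, hd⟩ :=
      Metric.mem_closure_iff.1 (omegaLimit_subset_closure_image2 _ _ _ (Ici_mem_atTop (n : ℝ)) hy)
        _ Nat.one_div_pos_of_nat
    exact ⟨t, ht, x, hx, by rwa [dist_comm]⟩
  choose u hu x hx hd using h
  exact ⟨u, x, tendsto_atTop_mono hu tendsto_natCast_atTop_atTop,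
    fun n => (Nat.cast_nonneg n).trans (hu n), hx, tendsto_iff_dist_tendsto_zero.2 <|
      squeeze_zero (fun _ => dist_nonneg) (fun n => (hd n).le)
        tendsto_one_div_add_atTop_nhds_zero_nat⟩

theorem exists_forall_infDist_lt_of_omegaLimit_subset [CompactSpace M]
    {ϕ : ℝ → α → M} {U : Set α} {A : Set M} (h : ω⁺ ϕ U ⊆ A) {ε : ℝ} (hε : 0 < ε) :
    ∃ T : ℝ, 0 ≤ T ∧ ∀ t ≥ T, ∀ x ∈ U, infDist (ϕ t x) A < ε := by
  have hV : IsOpen {y | infDist y A < ε} := isOpen_lt (continuous_infDist_pt A) continuous_const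
  have hωV : ω⁺ ϕ U ⊆ {y | infDist y A < ε} := fun y hy => by
    rwa [mem_ofPred_eq, infDist_zero_of_mem (h hy)]
  obtain ⟨T, hT⟩ :=
    eventually_atTop.1 (eventually_mapsTo_of_isOpen_of_omegaLimit_subset _ _ _ hV hωV)
  exact ⟨max T 0, le_max_right T 0, fun t ht x hx => hT t (le_of_max_le_left ht) hx⟩

theorem IsFullTrajectory.omegaLimit_subset {Φ : ℝ → M → M} {γ : ℝ → M}
    (hγ : IsFullTrajectory Φ γ) : ω⁺ Φ {γ 0} ⊆ trajectoryOmegaLimit γ := by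
  intro y hy
  obtain ⟨u, x, hu, hu0, hx, hlim⟩ := exists_seq_of_mem_omegaLimit hy
  refine ⟨u, hu, hlim.congr fun n => ?_⟩
  rw [hx n, hγ.2 (u n) 0 (hu0 n), sub_zero]

theorem trajectoryAlphaLimit_nonempty [CompactSpace M] (γ : ℝ → M) :
    (trajectoryAlphaLimit γ).Nonempty := by
  obtain ⟨w, -, φ, hφ, hw⟩ :=
    isCompact_univ.tendsto_subseq (x := fun n : ℕ => γ (-n)) fun _ => mem_univ _
  exact ⟨w, fun n => -(φ n : ℝ),
    tendsto_neg_atTop_atBot.comp (tendsto_natCast_atTop_atTop.comp hφ.tendsto_atTop), hw⟩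

end Trajectory

namespace IsSemiflow

section Topological

variable [TopologicalSpace M] {Φ : ℝ → M → M}

theorem continuous_map (hΦ : IsSemiflow Φ) (t : ℝ) : Continuous (Φ t) :=
  hΦ.continuous.comp (Continuous.prodMk_right t)

theorem continuous_orbit (hΦ : IsSemiflow Φ) (x : M) : Continuous (Φ · x) :=
  hΦ.continuous.comp (Continuous.prodMk_left x)

theorem map_sub_apply (hΦ : IsSemiflow Φ) {s t : ℝ} (hs : 0 ≤ s) (hst : s ≤ t) (x : M) :
    Φ (t - s) (Φ s x) = Φ t x := by
  rw [← hΦ.map_add _ _ (sub_nonneg.2 hst) hs, sub_add_cancel]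

theorem mapsTo_omegaLimit (hΦ : IsSemiflow Φ) {t : ℝ} (ht : 0 ≤ t) (S : Set M) :
    MapsTo (Φ t) (ω⁺ Φ S) (ω⁺ Φ S) := by
  have h : ∀ᶠ τ in atTop, EqOn (Φ t ∘ Φ τ) ((fun x => Φ (t + τ) x) ∘ id) S :=
    (eventually_ge_atTop 0).mono fun τ hτ x _ => (hΦ.map_add t τ ht hτ x).symm
  exact (mapsTo_omegaLimit' S (mapsTo_id S) h (hΦ.continuous_map t)).mono_right
    (omegaLimit_subset_of_tendsto Φ S (tendsto_atTop_add_const_left _ t tendsto_id))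

theorem apply_natCast_backward (hΦ : IsSemiflow Φ) {z : ℕ → M}
    (hz : ∀ m, Φ 1 (z (m + 1)) = z m) (k m : ℕ) : Φ k (z (m + k)) = z m := by
  induction k with
  | zero => simpa using hΦ.map_zero (z m)
  | succ k ih =>
    rw [Nat.cast_succ, hΦ.map_add _ _ k.cast_nonneg zero_le_one, ← add_assoc, hz, ih]

theorem exists_isFullTrajectory_of_backward (hΦ : IsSemiflow Φ) {z : ℕ → M}
    (hz : ∀ m, Φ 1 (z (m + 1)) = z m) :
    ∃ γ : ℝ → M, IsFullTrajectory Φ γ ∧ ∀ (m : ℕ) (t : ℝ), -(m : ℝ) ≤ t →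
      γ t = Φ (t + m) (z m) := by
  have hwell : ∀ (t : ℝ) (m m' : ℕ), -(m : ℝ) ≤ t → m ≤ m' →
      Φ (t + m') (z m') = Φ (t + m) (z m) := by
    intro t m m' hm hmm'
    obtain ⟨k, rfl⟩ := Nat.exists_eq_add_of_le hmm'
    rw [Nat.cast_add, ← add_assoc, hΦ.map_add _ _ (by linarith) k.cast_nonneg,
      hΦ.apply_natCast_backward hz]
  set γ : ℝ → M := fun t => Φ (t + ⌈-t⌉₊) (z ⌈-t⌉₊)
  have hγ : ∀ (m : ℕ) (t : ℝ), -(m : ℝ) ≤ t → γ t = Φ (t + m) (z m) := by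
    intro m t hm
    rcases le_total m ⌈-t⌉₊ with h | h
    · exact hwell t m _ hm h
    · exact (hwell t _ m (neg_le.2 (Nat.le_ceil _)) h).symm
  refine ⟨γ, ⟨continuous_iff_continuousAt.2 fun t₀ => ?_, fun t s hst => ?_⟩, hγ⟩
  · have hm : -((⌈-t₀⌉₊ + 1 : ℕ) : ℝ) < t₀ := by
      push_cast
      linarith [Nat.le_ceil (-t₀)]
    refine ((hΦ.continuous_orbit (z (⌈-t₀⌉₊ + 1))).comp
      (continuous_add_const ((⌈-t₀⌉₊ + 1 : ℕ) : ℝ))).continuousAt.congr ?_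
    filter_upwards [Ioi_mem_nhds hm] with t ht
    exact (hγ _ t ht.le).symm
  · have hs : -(⌈-s⌉₊ : ℝ) ≤ s := neg_le.2 (Nat.le_ceil _)
    rw [hγ _ t (hs.trans hst), hγ _ s hs, ← hΦ.map_add _ _ (sub_nonneg.2 hst) (by linarith)]
    ring_nf

theorem exists_isFullTrajectory_of_isInvariantSet (hΦ : IsSemiflow Φ) {S : Set M}
    (hS : IsInvariantSet Φ S) {y : M} (hy : y ∈ S) :
    ∃ γ : ℝ → M, IsFullTrajectory Φ γ ∧ γ 0 = y ∧ ∀ t, γ t ∈ S := by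
  obtain ⟨z, rfl, hzS, hz⟩ := hS.exists_backward_orbit hy
  obtain ⟨γ, hγ, hγz⟩ := hΦ.exists_isFullTrajectory_of_backward hz
  refine ⟨γ, hγ, by simpa [hΦ.map_zero] using hγz 0 0 (by simp), fun t => ?_⟩
  obtain ⟨m, hm⟩ := exists_nat_ge (-t)
  rw [hγz m t (neg_le.2 hm)]
  exact (hS _ (by linarith)).subset (mem_image_of_mem _ (hzS m))

end Topological

variable [MetricSpace M] {Φ : ℝ → M → M}

theorem omegaLimit_subset_image [CompactSpace M] (hΦ : IsSemiflow Φ) {t : ℝ} (ht : 0 ≤ t)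
    (S : Set M) : ω⁺ Φ S ⊆ Φ t '' ω⁺ Φ S := by
  intro y hy
  obtain ⟨u, x, hu, -, hx, hlim⟩ := exists_seq_of_mem_omegaLimit hy
  obtain ⟨z, -, φ, hφ, hz⟩ :=
    isCompact_univ.tendsto_subseq (x := fun n => Φ (u n - t) (x n)) fun _ => mem_univ _
  have huφ : Tendsto (u ∘ φ) atTop atTop := hu.comp hφ.tendsto_atTop
  refine ⟨z, mem_omegaLimit_of_tendsto ((tendsto_atTop_add_const_right _ (-t) huφ).congr
    fun n => (sub_eq_add_neg _ _).symm) (fun n => hx (φ n)) hz, ?_⟩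
  refine tendsto_nhds_unique (((hΦ.continuous_map t).tendsto z).comp hz)
    ((hlim.comp hφ.tendsto_atTop).congr' ?_)
  filter_upwards [huφ.eventually_ge_atTop t] with n hn
  show Φ (u (φ n)) (x (φ n)) = Φ t (Φ (u (φ n) - t) (x (φ n)))
  rw [← hΦ.map_add t (u (φ n) - t) ht (sub_nonneg.2 hn), add_sub_cancel]

theorem isInvariantSet_omegaLimit [CompactSpace M] (hΦ : IsSemiflow Φ) (S : Set M) :
    IsInvariantSet Φ (ω⁺ Φ S) := fun _ ht =>
  (hΦ.mapsTo_omegaLimit ht S).image_subset.antisymm (hΦ.omegaLimit_subset_image ht S)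

theorem omegaLimit_subset_omegaLimit_image (hΦ : IsSemiflow Φ) {s : ℝ} (hs : 0 ≤ s)
    (S : Set M) : ω⁺ Φ S ⊆ ω⁺ Φ (Φ s '' S) := by
  intro y hy
  obtain ⟨u, x, hu, -, hx, hlim⟩ := exists_seq_of_mem_omegaLimit hy
  refine mem_omegaLimit_of_tendsto (x := fun n => Φ s (x n))
    ((tendsto_atTop_add_const_right _ (-s) hu).congr fun n => (sub_eq_add_neg _ _).symm)
    (fun n => mem_image_of_mem _ (hx n)) (hlim.congr' ?_)
  filter_upwards [hu.eventually_ge_atTop s] with n hn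
  exact (hΦ.map_sub_apply hs hn _).symm

theorem omegaLimit_singleton_subset_apply (hΦ : IsSemiflow Φ) {s : ℝ} (hs : 0 ≤ s) (x : M) :
    ω⁺ Φ {x} ⊆ ω⁺ Φ {Φ s x} := by
  simpa only [image_singleton] using hΦ.omegaLimit_subset_omegaLimit_image hs {x}

theorem apply_notMem_of_disjoint_omegaLimit [CompactSpace M] (hΦ : IsSemiflow Φ) {R : Set M}
    (hR : IsClosed R) (hRfwd : ∀ t, 0 ≤ t → MapsTo (Φ t) R R) {x : M}
    (hx : Disjoint (ω⁺ Φ {x}) R) {t : ℝ} (ht : 0 ≤ t) : Φ t x ∉ R := by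
  intro htR
  have hsub : ω⁺ Φ {x} ⊆ R := (hΦ.omegaLimit_singleton_subset_apply ht x).trans
    (omegaLimit_singleton_subset_of_mapsTo hR hRfwd htR)
  obtain ⟨y, hy⟩ := nonempty_omegaLimit atTop Φ {x} (singleton_nonempty x)
  exact Set.disjoint_left.1 hx hy (hsub hy)

theorem disjoint_omegaLimit_of_notMem (hΦ : IsSemiflow Φ) {R W : Set M} (hW : IsOpen W)
    (hR : IsClosed R) (hRW : R ⊆ W) (hWR : ∀ x ∈ W \ R, Disjoint (ω⁺ Φ {x}) W) {x : M}
    (hx : x ∉ R) : Disjoint (ω⁺ Φ {x}) W := by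
  by_cases hmeet : ∃ t, 0 ≤ t ∧ Φ t x ∈ W
  · obtain ⟨t, ht, htW⟩ := hmeet
    obtain ⟨s, hs, hsWR⟩ := exists_mem_Icc_mem_diff (hΦ.continuous_orbit x) hW hR hRW ht
      (by rwa [hΦ.map_zero]) htW
    exact (hWR _ hsWR).mono_left (hΦ.omegaLimit_singleton_subset_apply hs.1 x)
  · exact subset_compl_iff_disjoint_right.1 <| omegaLimit_subset_of_eventually_mapsTo
      hW.isClosed_compl ((eventually_ge_atTop 0).mono fun t ht =>
        mapsTo_singleton.2 fun h => hmeet ⟨t, ht, h⟩)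

theorem exists_last_visit (hΦ : IsSemiflow Φ) {K : Set M} (hK : IsClosed K) {x : M}
    (hx : x ∈ K) {u : ℝ} (hu : 0 ≤ u) :
    ∃ q ∈ K, ∃ d ∈ Icc 0 u, Φ d q = Φ u x ∧ ∀ τ ∈ Ioc 0 d, Φ τ q ∉ K := by
  obtain ⟨s, ⟨hs, hsK⟩, hsmax⟩ := (isCompact_Icc.inter_right
    (hK.preimage (hΦ.continuous_orbit x))).exists_isGreatest
      ⟨0, left_mem_Icc.2 hu, by rwa [mem_preimage, hΦ.map_zero]⟩
  refine ⟨Φ s x, hsK, u - s, ⟨sub_nonneg.2 hs.2, by linarith [hs.1]⟩,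
    hΦ.map_sub_apply hs.1 hs.2 x, fun τ hτ hτK => ?_⟩
  have hsτ : s + τ ∈ Icc 0 u ∩ (Φ · x) ⁻¹' K := by
    refine ⟨⟨by linarith [hs.1, hτ.1], by linarith [hτ.2]⟩, ?_⟩
    rwa [mem_preimage, add_comm, hΦ.map_add τ s hτ.1.le hs.1]
  linarith [hsmax hsτ, hτ.1]

theorem disjoint_omegaLimit_of_forall_exists_mem_interior [CompactSpace M]
    (hΦ : IsSemiflow Φ) {K P : Set M} (hK : IsClosed K) (hP : ∀ q ∈ K, ∀ t, 0 ≤ t → Φ t q ∉ P)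
    (hret : ∀ q ∈ K, ∃ t > 0, Φ t q ∈ interior K) : Disjoint (ω⁺ Φ K) P := by
  rw [Set.disjoint_left]
  intro p hp hpP
  obtain ⟨u, x, -, hu, hxK, hlim⟩ := exists_seq_of_mem_omegaLimit hp
  choose q hqK d hd hdq hexit using fun n => hΦ.exists_last_visit hK (hxK n) (hu n)
  obtain ⟨q₀, hq₀K, φ, hφ, hq⟩ := hK.isCompact.tendsto_subseq hqK
  obtain ⟨τ, hτ, hτK⟩ := hret q₀ hq₀K
  -- orbits from near `q₀` are back in `K` at time `τ`, so their final excursions are shorter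
  have hdτ : ∀ᶠ n in atTop, d (φ n) ∈ Icc 0 τ := by
    filter_upwards [(((hΦ.continuous_map τ).tendsto q₀).comp hq).eventually
      (isOpen_interior.mem_nhds hτK)] with n hn
    exact ⟨(hd _).1, not_lt.1 fun h => hexit _ τ ⟨hτ, h.le⟩ (interior_subset hn)⟩
  obtain ⟨τ', hτ', ψ, hψ, hd'⟩ := isCompact_Icc.tendsto_subseq' hdτ.frequently
  have h₁ : Tendsto (fun n => Φ (d (φ (ψ n))) (q (φ (ψ n)))) atTop (𝓝 (Φ τ' q₀)) :=
    (hΦ.continuous.tendsto (τ', q₀)).comp (hd'.prodMk_nhds (hq.comp hψ.tendsto_atTop))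
  have h₂ : Tendsto (fun n => Φ (d (φ (ψ n))) (q (φ (ψ n)))) atTop (𝓝 p) :=
    (hlim.comp (hφ.comp hψ).tendsto_atTop).congr fun n => (hdq _).symm
  exact hP q₀ hq₀K τ' hτ'.1 (tendsto_nhds_unique h₁ h₂ ▸ hpP)

theorem disjoint_of_isInvariantSet [CompactSpace M] (hΦ : IsSemiflow Φ) {S R W : Set M}
    (hS : IsInvariantSet Φ S) (hSc : IsClosed S) (hSR : Disjoint S R)
    (hα : ∀ x ∈ W \ R, ∀ γ, IsFullTrajectory Φ γ → γ 0 = x → trajectoryAlphaLimit γ ⊆ R) :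
    Disjoint S W := by
  rw [Set.disjoint_left]
  intro y hyS hyW
  obtain ⟨γ, hγ, rfl, hγS⟩ := hΦ.exists_isFullTrajectory_of_isInvariantSet hS hyS
  obtain ⟨w, hw⟩ := trajectoryAlphaLimit_nonempty γ
  have hwS : w ∈ S := by
    obtain ⟨u, -, hu⟩ := hw
    exact hSc.mem_of_tendsto hu (Eventually.of_forall fun n => hγS (u n))
  exact Set.disjoint_left.1 hSR hwS
    (hα _ ⟨hyW, Set.disjoint_left.1 hSR hyS⟩ γ hγ rfl hw)

theorem exists_isOpen_omegaLimit_eq [CompactSpace M] (hΦ : IsSemiflow Φ) {R W A : Set M}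
    (hR : IsCompact R) (hRfwd : ∀ t, 0 ≤ t → MapsTo (Φ t) R R) (hW : IsOpen W) (hRW : R ⊆ W)
    (hωW : ∀ x ∉ R, Disjoint (ω⁺ Φ {x}) W)
    (hα : ∀ x ∈ W \ R, ∀ γ, IsFullTrajectory Φ γ → γ 0 = x → trajectoryAlphaLimit γ ⊆ R)
    (hAsub : A ⊆ Wᶜ) (hAinv : IsInvariantSet Φ A)
    (hAmax : ∀ S, S ⊆ Wᶜ → IsInvariantSet Φ S → S ⊆ A) :
    ∃ U, IsOpen U ∧ A ⊆ U ∧ ω⁺ Φ U = A := by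
  have hωA : ∀ x ∉ R, ω⁺ Φ {x} ⊆ A := fun x hx =>
    hAmax _ (hωW x hx).subset_compl_right (hΦ.isInvariantSet_omegaLimit _)
  obtain ⟨ρ, hρ, hρW⟩ := hR.exists_thickening_subset_open hW hRW
  set K := (thickening (ρ / 2) R)ᶜ
  set U := (cthickening (ρ / 2) R)ᶜ
  have hKR : ∀ q ∈ K, q ∉ R := fun q hq h => hq (self_subset_thickening (half_pos hρ) R h)
  have hAU : A ⊆ U := fun a ha h =>
    hAsub ha (hρW (cthickening_subset_thickening' hρ (half_lt_self hρ) R h))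
  have hUK : U ⊆ interior K := interior_maximal
    (compl_subset_compl.2 (thickening_subset_cthickening _ _)) isClosed_cthickening.isOpen_compl
  have hωKR : Disjoint (ω⁺ Φ K) R := hΦ.disjoint_omegaLimit_of_forall_exists_mem_interior
    isOpen_thickening.isClosed_compl
    (fun q hq t ht => hΦ.apply_notMem_of_disjoint_omegaLimit hR.isClosed hRfwd
      ((hωW q (hKR q hq)).mono_right hRW) ht)
    fun q hq => by
      obtain ⟨t, hqt, ht⟩ := ((eventually_mapsTo_of_isOpen_of_omegaLimit_subset atTop Φ {q}
        isClosed_cthickening.isOpen_compl ((hωA q (hKR q hq)).trans hAU)).and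
          (eventually_gt_atTop 0)).exists
      exact ⟨t, ht, hUK (hqt (mem_singleton q))⟩
  have hωKW : Disjoint (ω⁺ Φ K) W := hΦ.disjoint_of_isInvariantSet
    (hΦ.isInvariantSet_omegaLimit K) (isClosed_omegaLimit _ _ _) hωKR hα
  have hωUK : ω⁺ Φ U ⊆ ω⁺ Φ K := omegaLimit_mono_right _ _ (hUK.trans interior_subset)
  refine ⟨U, isClosed_cthickening.isOpen_compl, hAU, (hωUK.trans ?_).antisymm
    (hAinv.subset_omegaLimit.trans (omegaLimit_mono_right _ _ hAU))⟩
  exact hAmax _ hωKW.subset_compl_right (hΦ.isInvariantSet_omegaLimit K)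

end IsSemiflow

end Semiflow

theorem attractor_repeller_pair_general
    {M : Type*} [MetricSpace M] [CompactSpace M]
    (Φ : ℝ → M → M)
    (hΦcont : Continuous fun p : ℝ × M => Φ p.1 p.2)
    (hΦ0 : ∀ x, Φ 0 x = x)
    (hΦadd : ∀ t s : ℝ, 0 ≤ t → 0 ≤ s → ∀ x, Φ (t + s) x = Φ t (Φ s x))
    -- through every point of `M` there passes a full trajectory
    (htraj : ∀ x : M, ∃ γ : ℝ → M, Continuous γ ∧ γ 0 = x ∧
      ∀ t s : ℝ, s ≤ t → γ t = Φ (t - s) (γ s))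
    (R : Set M) (hRcomp : IsCompact R)
    (hRinv : ∀ t : ℝ, 0 ≤ t → Φ t '' R = R)
    (W : Set M) (hWopen : IsOpen W) (hRW : R ⊆ W)
    -- every full trajectory through a point of `W \ R` satisfies
    -- `α(γ) ⊆ R` and `ω(γ) ∩ W = ∅`
    (hW : ∀ x ∈ W \ R, ∀ γ : ℝ → M, Continuous γ → γ 0 = x →
      (∀ t s : ℝ, s ≤ t → γ t = Φ (t - s) (γ s)) →
      ({y : M | ∃ u : ℕ → ℝ, Tendsto u atTop atBot ∧
          Tendsto (fun n => γ (u n)) atTop (nhds y)} ⊆ R) ∧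
      ({y : M | ∃ u : ℕ → ℝ, Tendsto u atTop atTop ∧
          Tendsto (fun n => γ (u n)) atTop (nhds y)} ∩ W = ∅))
    -- `A` is the maximal invariant subset of `M \ W`
    (A : Set M)
    (hAsub : A ⊆ Wᶜ)
    (hAinv : ∀ t : ℝ, 0 ≤ t → Φ t '' A = A)
    (hAmax : ∀ S : Set M, S ⊆ Wᶜ → (∀ t : ℝ, 0 ≤ t → Φ t '' S = S) → S ⊆ A) :
    -- `A` is an attractor: compact, invariant, attracting a neighborhood of itself
    (IsCompact A ∧
      ∃ U : Set M, IsOpen U ∧ A ⊆ U ∧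
        ∀ ε > 0, ∃ T : ℝ, 0 ≤ T ∧ ∀ t ≥ T, ∀ x ∈ U, Metric.infDist (Φ t x) A < ε) ∧
    -- and `R` is the dual repeller: `R = {x | ω(x) ∩ A = ∅}`
    R = {x : M | (⋂ T ∈ Set.Ici (0:ℝ), closure {y : M | ∃ t ≥ T, y = Φ t x}) ∩ A = ∅} := by
  have hΦ : IsSemiflow Φ := ⟨hΦcont, hΦ0, hΦadd⟩
  have hRfwd : ∀ t, 0 ≤ t → MapsTo (Φ t) R R := fun t ht =>
    mapsTo_iff_image_subset.2 (hRinv t ht).subset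
  have hωW : ∀ x ∉ R, Disjoint (ω⁺ Φ {x}) W := fun x =>
    hΦ.disjoint_omegaLimit_of_notMem hWopen hRcomp.isClosed hRW fun y hy => by
      obtain ⟨γ, hγc, rfl, hγ⟩ := htraj y
      exact (disjoint_iff_inter_eq_empty.2 (hW _ hy γ hγc rfl hγ).2).mono_left
        (IsFullTrajectory.omegaLimit_subset ⟨hγc, hγ⟩)
  obtain ⟨U, hU, hAU, hωU⟩ := hΦ.exists_isOpen_omegaLimit_eq hRcomp hRfwd hWopen hRW hωW
    (fun x hx γ hγ h0 => (hW x hx γ hγ.1 h0 hγ.2).1) hAsub hAinv hAmax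
  refine ⟨⟨hωU ▸ (isClosed_omegaLimit _ _ _).isCompact, U, hU, hAU,
    fun ε hε => exists_forall_infDist_lt_of_omegaLimit_subset hωU.subset hε⟩, ?_⟩
  ext x
  rw [mem_ofPred_eq, ← omegaLimit_singleton_eq_biInter, ← disjoint_iff_inter_eq_empty]
  refine ⟨fun hx => disjoint_compl_right.mono
    ((omegaLimit_singleton_subset_of_mapsTo hRcomp.isClosed hRfwd hx).trans hRW) hAsub,
    fun h => ?_⟩
  by_contra hx
  obtain ⟨y, hy⟩ := nonempty_omegaLimit atTop Φ {x} (singleton_nonempty x)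
  exact Set.disjoint_left.1 h hy
    (hAmax _ (hωW x hx).subset_compl_right (hΦ.isInvariantSet_omegaLimit _) hy)

/-- Let `M` be a compact metric space and `Φ` a semiflow on `M`
such that through every point there passes a full trajectory. If `R ⊆ M` is a
nonempty compact invariant set admitting an open neighborhood `W` such that every
full trajectory through a point of `W \ R` has its α-limit set in `R` and its
ω-limit set disjoint from `W`, and if `A` is the (nonempty) maximal invariant
subset of `M \ W`, then `A` is an attractor and `R = {x | ω(x) ∩ A = ∅}`,
i.e. `(A, R)` is an attractor-repeller pair in `M`. -/
theorem attractor_repeller_pair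
    {M : Type*} [MetricSpace M] [CompactSpace M]
    (Φ : ℝ → M → M)
    (hΦcont : Continuous fun p : ℝ × M => Φ p.1 p.2)
    (hΦ0 : ∀ x, Φ 0 x = x)
    (hΦadd : ∀ t s : ℝ, 0 ≤ t → 0 ≤ s → ∀ x, Φ (t + s) x = Φ t (Φ s x))
    -- through every point of `M` there passes a full trajectory
    (htraj : ∀ x : M, ∃ γ : ℝ → M, Continuous γ ∧ γ 0 = x ∧
      ∀ t s : ℝ, s ≤ t → γ t = Φ (t - s) (γ s))
    (R : Set M) (hRne : R.Nonempty) (hRcomp : IsCompact R)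
    (hRinv : ∀ t : ℝ, 0 ≤ t → Φ t '' R = R)
    (W : Set M) (hWopen : IsOpen W) (hRW : R ⊆ W)
    -- every full trajectory through a point of `W \ R` satisfies
    -- `α(γ) ⊆ R` and `ω(γ) ∩ W = ∅`
    (hW : ∀ x ∈ W \ R, ∀ γ : ℝ → M, Continuous γ → γ 0 = x →
      (∀ t s : ℝ, s ≤ t → γ t = Φ (t - s) (γ s)) →
      ({y : M | ∃ u : ℕ → ℝ, Tendsto u atTop atBot ∧
          Tendsto (fun n => γ (u n)) atTop (nhds y)} ⊆ R) ∧
      ({y : M | ∃ u : ℕ → ℝ, Tendsto u atTop atTop ∧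
          Tendsto (fun n => γ (u n)) atTop (nhds y)} ∩ W = ∅))
    -- `A` is the maximal invariant subset of `M \ W`, assumed nonempty
    (A : Set M) (hAne : A.Nonempty)
    (hAsub : A ⊆ Wᶜ)
    (hAinv : ∀ t : ℝ, 0 ≤ t → Φ t '' A = A)
    (hAmax : ∀ S : Set M, S ⊆ Wᶜ → (∀ t : ℝ, 0 ≤ t → Φ t '' S = S) → S ⊆ A) :
    -- `A` is an attractor: compact, invariant, attracting a neighborhood of itself
    (IsCompact A ∧
      ∃ U : Set M, IsOpen U ∧ A ⊆ U ∧
        ∀ ε > 0, ∃ T : ℝ, 0 ≤ T ∧ ∀ t ≥ T, ∀ x ∈ U, Metric.infDist (Φ t x) A < ε) ∧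
    -- and `R` is the dual repeller: `R = {x | ω(x) ∩ A = ∅}`
    R = {x : M | (⋂ T ∈ Set.Ici (0:ℝ), closure {y : M | ∃ t ≥ T, y = Φ t x}) ∩ A = ∅} :=
  attractor_repeller_pair_general Φ hΦcont hΦ0 hΦadd htraj R hRcomp hRinv W hWopen hRW hW A hAsub
    hAinv hAmax
end

section
/- Let X be a real Banach space, J ⊆ ℝ a set containing λ₀, and λ ↦ P_λ a family of continuous linear projections on X, continuous in λ with respect to the operator norm, such that ‖P_λ − P_{λ₀}‖ ≤ c < 1 for all λ ∈ J. Define T_λ := P_{λ₀}∘P_λ + (I − P_{λ₀})∘(I − P_λ). Then each T_λ is a continuous linear automorphism of X, T_{λ₀} = I, the map λ ↦ T_λ is operator-norm continuous, and T_λ(range P_λ) = range P_{λ₀} and T_λ(ker P_λ) = ker P_{λ₀} for every λ ∈ J. -/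
/-!
For idempotents `p, q` in a ring, `U = q p + (1 - q)(1 - p)` satisfies `U p = q U`, and the
products of `U` with its mirror image `q ↔ p`, taken in either order, both equal `1 - (q - p)²`.
In a Banach algebra with `‖q - p‖ < 1` this is a unit by the Neumann series, so `U` is
invertible. An invertible operator intertwining `P_λ` with `P_{λ₀}` carries range onto range
and kernel onto kernel.
-/

open Function

section Ring

variable {R : Type*} [Ring R] {p q : R}

/-- `intertwiner q p` is the paper's `T_λ` for `q = P_{λ₀}`, `p = P_λ`. -/
def intertwiner (q p : R) : R := q * p + (1 - q) * (1 - p)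

theorem intertwiner_self (hp : IsIdempotentElem p) : intertwiner p p = 1 := by
  unfold intertwiner
  noncomm_ring
  rw [hp.eq]
  abel

theorem intertwiner_mul_intertwiner (hp : IsIdempotentElem p) (hq : IsIdempotentElem q) :
    intertwiner q p * intertwiner p q = 1 - (q - p) ^ 2 := by
  unfold intertwiner
  noncomm_ring
  simp only [← mul_assoc, hp.eq, hq.eq]
  abel

theorem intertwiner_mul_eq_mul_intertwiner (hp : IsIdempotentElem p) (hq : IsIdempotentElem q) :
    intertwiner q p * p = q * intertwiner q p := by
  unfold intertwiner
  noncomm_ring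
  simp only [← mul_assoc, hp.eq, hq.eq]
  abel

theorem commute_intertwiner (hp : IsIdempotentElem p) (hq : IsIdempotentElem q) :
    Commute (intertwiner q p) (intertwiner p q) := by
  rw [Commute, SemiconjBy, intertwiner_mul_intertwiner hp hq, intertwiner_mul_intertwiner hq hp,
    ← neg_sub q p, neg_sq]

end Ring

theorem isUnit_intertwiner {R : Type*} [NormedRing R] [HasSummableGeomSeries R] {p q : R}
    (hp : IsIdempotentElem p) (hq : IsIdempotentElem q) (hpq : ‖q - p‖ < 1) :
    IsUnit (intertwiner q p) := by
  have hsq : ‖(q - p) ^ 2‖ < 1 :=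
    (norm_pow_le' _ two_pos).trans_lt (pow_lt_one₀ (norm_nonneg _) hpq two_ne_zero)
  have h := isUnit_one_sub_of_norm_lt_one hsq
  rw [← intertwiner_mul_intertwiner hp hq, (commute_intertwiner hp hq).isUnit_mul_iff] at h
  exact h.1

namespace LinearMap

variable {R M N : Type*} [Semiring R] [AddCommMonoid M] [Module R M] [AddCommMonoid N] [Module R N]
  {t : M →ₗ[R] N} {f : M →ₗ[R] M} {g : N →ₗ[R] N}

theorem map_range_eq_of_comp_eq (ht : Surjective t) (h : t ∘ₗ f = g ∘ₗ t) :
    (range f).map t = range g := by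
  rw [← range_comp, h, range_comp_of_range_eq_top _ (range_eq_top.2 ht)]

theorem map_ker_eq_of_comp_eq (ht : Bijective t) (h : t ∘ₗ f = g ∘ₗ t) :
    (ker f).map t = ker g := by
  rw [← ker_comp_of_ker_eq_bot f (ker_eq_bot_of_injective ht.1), h, ker_comp,
    Submodule.map_comap_eq_of_surjective ht.2]

end LinearMap

/-- Given a norm-continuous family `λ ↦ P_λ` of continuous
linear projections on a real Banach space `X`, defined for `λ ∈ J ∋ l₀`, with
`‖P_λ − P_{l₀}‖ ≤ c < 1` on `J`, the operators
`T_λ := P_{l₀} ∘ P_λ + (I − P_{l₀}) ∘ (I − P_λ)` form a norm-continuous family of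
continuous linear automorphisms of `X` with `T_{l₀} = I`, and
`T_λ (range P_λ) = range P_{l₀}`, `T_λ (ker P_λ) = ker P_{l₀}` for every `λ ∈ J`. -/
theorem family_of_isomorphisms_induced_by_projections
    {X : Type*} [NormedAddCommGroup X] [NormedSpace ℝ X] [CompleteSpace X]
    (J : Set ℝ) (l₀ : ℝ) (hl₀ : l₀ ∈ J)
    (P : ℝ → (X →L[ℝ] X))
    (hproj : ∀ l ∈ J, P l ∘L P l = P l)
    (hPcont : ContinuousOn P J)
    (c : ℝ) (hc : c < 1) (hnorm : ∀ l ∈ J, ‖P l - P l₀‖ ≤ c)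
    (T : ℝ → (X →L[ℝ] X))
    (hT : ∀ l : ℝ, T l = (P l₀) ∘L (P l) +
      (ContinuousLinearMap.id ℝ X - P l₀) ∘L (ContinuousLinearMap.id ℝ X - P l)) :
    (∀ l ∈ J, ∃ e : X ≃L[ℝ] X, ∀ x : X, e x = T l x) ∧
    T l₀ = ContinuousLinearMap.id ℝ X ∧
    ContinuousOn T J ∧
    (∀ l ∈ J, ⇑(T l) '' (LinearMap.range (P l : X →ₗ[ℝ] X) : Set X) =
      (LinearMap.range (P l₀ : X →ₗ[ℝ] X) : Set X)) ∧
    (∀ l ∈ J, ⇑(T l) '' (LinearMap.ker (P l : X →ₗ[ℝ] X) : Set X) =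
      (LinearMap.ker (P l₀ : X →ₗ[ℝ] X) : Set X)) := by
  replace hT : ∀ l, T l = intertwiner (P l₀) (P l) := hT
  have hunit : ∀ l ∈ J, IsUnit (T l) := fun l hl => hT l ▸
    isUnit_intertwiner (hproj l hl) (hproj l₀ hl₀)
      (((norm_sub_rev _ _).trans_le (hnorm l hl)).trans_lt hc)
  have hbij : ∀ l ∈ J, Bijective (T l) := fun l hl =>
    (ContinuousLinearEquiv.unitsEquiv ℝ X (hunit l hl).unit).bijective
  have hcomm : ∀ l ∈ J, (T l : X →ₗ[ℝ] X) ∘ₗ (P l : X →ₗ[ℝ] X) =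
      (P l₀ : X →ₗ[ℝ] X) ∘ₗ (T l : X →ₗ[ℝ] X) := fun l hl => by
    rw [hT]
    exact congrArg ContinuousLinearMap.toLinearMap
      (intertwiner_mul_eq_mul_intertwiner (hproj l hl) (hproj l₀ hl₀))
  refine ⟨fun l hl => ⟨ContinuousLinearEquiv.unitsEquiv ℝ X (hunit l hl).unit, fun _ => rfl⟩,
    hT l₀ ▸ intertwiner_self (hproj l₀ hl₀), ?_, fun l hl => ?_, fun l hl => ?_⟩
  · have hcont : ContinuousOn (fun l => intertwiner (P l₀) (P l)) J :=
      (continuousOn_const.mul hPcont).add (continuousOn_const.mul (continuousOn_const.sub hPcont))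
    exact hcont.congr fun l _ => hT l
  · exact congrArg SetLike.coe (LinearMap.map_range_eq_of_comp_eq (hbij l hl).2 (hcomm l hl))
  · exact congrArg SetLike.coe (LinearMap.map_ker_eq_of_comp_eq (hbij l hl) (hcomm l hl))
end

section
/- Let φ be a continuous flow on a metric space X and let x₀ be an equilibrium (φ(t, x₀) = x₀ for all t ∈ ℝ). Suppose {x₀} attracts a neighborhood U of x₀ uniformly: for every neighborhood V of x₀ there exists T ≥ 0 such that φ(t, x) ∈ V for all t ≥ T and all x ∈ U. Let Σ = {x ∈ X : φ(t,x) → x₀ as t → +∞} be the basin of attraction of x₀. Then Σ is open and invariant, and the map H : [0,1] × Σ → Σ defined by H(s,x) = φ(s/(1−s), x) for 0 ≤ s < 1 and H(1,x) = x₀ is continuous, satisfies H(0,·) = id_Σ, H(1,·) ≡ x₀ and H(s,x₀) = x₀ for all s; hence H is a strong deformation retraction of Σ onto {x₀}, and in particular Σ is contractible. -/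
/-!
Every point of the basin reaches the interior of `U` in finite time `T`, hence so does every point
of a neighbourhood of it: the basin is open, and the uniform attraction of `U` transfers, after the
time shift by `T`, to a neighbourhood of each point of the basin. Since `s / (1 - s) → ∞` as
`s → 1⁻`, this locally uniform attraction is exactly the continuity of `H` at `s = 1`.
-/

open Set Filter Topology Function

theorem tendsto_div_one_sub_nhdsLT_one : Tendsto (fun s : ℝ => s / (1 - s)) (𝓝[<] 1) atTop := by
  have h_sub : Tendsto (fun s : ℝ => 1 - s) (𝓝[<] 1) (𝓝[>] 0) := by
    refine tendsto_nhdsWithin_iff.2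
      ⟨?_, eventually_nhdsWithin_of_forall fun s hs => sub_pos.2 (mem_Iio.1 hs)⟩
    exact ((continuous_const.sub continuous_id).tendsto' 1 0 (sub_self 1)).mono_left
      nhdsWithin_le_nhds
  simpa only [div_eq_mul_inv, id, Pi.inv_apply] using
    (tendsto_id.mono_left nhdsWithin_le_nhds).pos_mul_atTop one_pos
      h_sub.inv_tendsto_nhdsGT_zero

theorem ContractibleSpace.of_continuousOn_homotopy {α : Type*} [TopologicalSpace α] {S : Set α}
    {x₀ : α} (hx₀ : x₀ ∈ S) {H : ℝ → α → α} (hcont : ContinuousOn (uncurry H) (Icc 0 1 ×ˢ S))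
    (hmaps : ∀ s ∈ Icc (0 : ℝ) 1, ∀ x ∈ S, H s x ∈ S) (hH₀ : ∀ x ∈ S, H 0 x = x)
    (hH₁ : ∀ x ∈ S, H 1 x = x₀) : ContractibleSpace S := by
  rw [contractible_iff_id_nullhomotopic]
  refine ⟨⟨x₀, hx₀⟩, ⟨{
    toFun := fun p => ⟨H p.1 p.2, hmaps p.1 p.1.2 p.2 p.2.2⟩
    continuous_toFun := ?_
    map_zero_left := fun x => Subtype.ext (hH₀ x x.2)
    map_one_left := fun x => Subtype.ext (hH₁ x x.2) }⟩⟩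
  exact (hcont.comp_continuous (f := fun p : unitInterval × S => ((p.1 : ℝ), (p.2 : α)))
    (by fun_prop) fun p => ⟨p.1.2, p.2.2⟩).subtype_mk _

namespace Flow

variable {α : Type*} [TopologicalSpace α] (ϕ : Flow ℝ α)

def basin (x₀ : α) : Set α := {x | Tendsto (fun t => ϕ t x) atTop (𝓝 x₀)}

variable {ϕ} {x₀ x : α} {U : Set α}

theorem map_mem_basin_iff (t : ℝ) : ϕ t x ∈ ϕ.basin x₀ ↔ x ∈ ϕ.basin x₀ := by
  simp only [basin, mem_ofPred_eq, ← ϕ.map_add]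
  exact (tendsto_map'_iff (f := fun s => ϕ s x) (g := (· + t))).symm.trans
    (by rw [map_add_atTop_eq])

theorem isInvariant_basin : IsInvariant ϕ (ϕ.basin x₀) :=
  fun t _ hx => (map_mem_basin_iff t).2 hx

theorem exists_mem_nhds_map_of_mem_basin (hU : U ∈ 𝓝 x₀) (hx : x ∈ ϕ.basin x₀) :
    ∃ T, U ∈ 𝓝 (ϕ T x) :=
  (hx.eventually (eventually_mem_nhds_iff.2 hU)).exists

theorem subset_basin (hattr : Tendsto (uncurry ϕ) (atTop ×ˢ 𝓟 U) (𝓝 x₀)) : U ⊆ ϕ.basin x₀ :=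
  fun _ hx => hattr.comp (tendsto_id.prodMk (tendsto_principal.2 (.of_forall fun _ => hx)))

theorem isOpen_basin (hU : U ∈ 𝓝 x₀) (hUB : U ⊆ ϕ.basin x₀) : IsOpen (ϕ.basin x₀) := by
  refine isOpen_iff_mem_nhds.2 fun x hx => ?_
  obtain ⟨T, hT⟩ := exists_mem_nhds_map_of_mem_basin hU hx
  exact mem_of_superset ((ϕ.continuous_toFun T).continuousAt hT) fun y hy =>
    (map_mem_basin_iff T).1 (hUB hy)

theorem tendsto_uncurry_atTop_prod_nhds (hU : U ∈ 𝓝 x₀)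
    (hattr : Tendsto (uncurry ϕ) (atTop ×ˢ 𝓟 U) (𝓝 x₀)) (hx : x ∈ ϕ.basin x₀) :
    Tendsto (uncurry ϕ) (atTop ×ˢ 𝓝 x) (𝓝 x₀) := by
  obtain ⟨T, hT⟩ := exists_mem_nhds_map_of_mem_basin hU hx
  have h_shift : Tendsto (fun p : ℝ × α => (p.1 - T, ϕ T p.2)) (atTop ×ˢ 𝓝 x) (atTop ×ˢ 𝓟 U) :=
    (tendsto_atTop_add_const_right _ (-T) tendsto_id).prodMap
      (tendsto_principal.2 ((ϕ.continuous_toFun T).continuousAt hT))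
  refine (hattr.comp h_shift).congr fun p => ?_
  simp [uncurry, ← ϕ.map_add]

theorem continuousOn_uncurry_of_eq_div_one_sub {H : ℝ → α → α} {S : Set α}
    (hH₁ : ∀ s : ℝ, 0 ≤ s → s < 1 → ∀ x, H s x = ϕ (s / (1 - s)) x) (hH₂ : ∀ x, H 1 x = x₀)
    (hattr : ∀ x ∈ S, Tendsto (uncurry ϕ) (atTop ×ˢ 𝓝 x) (𝓝 x₀)) :
    ContinuousOn (uncurry H) (Icc 0 1 ×ˢ S) := by
  rintro ⟨s, x⟩ ⟨hs, hx⟩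
  rcases hs.2.lt_or_eq with hs₁ | rfl
  · have h_cont : ContinuousAt (fun p : ℝ × α => ϕ (p.1 / (1 - p.1)) p.2) (s, x) :=
      ϕ.cont'.continuousAt.comp <| (continuousAt_fst.div (continuousAt_const.sub continuousAt_fst)
        (sub_ne_zero.2 hs₁.ne')).prodMk continuousAt_snd
    refine h_cont.continuousWithinAt.congr_of_eventuallyEq ?_ (hH₁ s hs.1 hs₁ x)
    have h_lt : ∀ᶠ p in 𝓝[Icc 0 1 ×ˢ S] (s, x), p.1 < 1 :=
      nhdsWithin_le_nhds (continuousAt_fst.eventually_lt continuousAt_const hs₁)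
    filter_upwards [h_lt, self_mem_nhdsWithin] with p hp₁ hp using hH₁ p.1 hp.1.1 hp₁ p.2
  · rw [ContinuousWithinAt, nhdsWithin_prod_eq, ← Ico_insert_right zero_le_one, nhdsWithin_insert,
      sup_prod, tendsto_sup, pure_prod, tendsto_map'_iff, uncurry_apply_pair, hH₂]
    constructor
    · simp only [comp_def, uncurry_apply_pair, hH₂, tendsto_const_nhds]
    · have h_time : Tendsto (fun s : ℝ => s / (1 - s)) (𝓝[Ico 0 1] 1) atTop :=
        tendsto_div_one_sub_nhdsLT_one.mono_left (nhdsWithin_mono 1 Ico_subset_Iio_self)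
      refine ((hattr x hx).comp (h_time.prodMap (tendsto_id.mono_left nhdsWithin_le_nhds))).congr' ?_
      filter_upwards [prod_mem_prod self_mem_nhdsWithin univ_mem] with p hp
      exact (hH₁ p.1 hp.1.1 hp.1.2 p.2).symm

end Flow

/-- Let `φ` be a continuous flow on a metric space `X` and `x₀`
an equilibrium that attracts a neighborhood `U` of itself uniformly. Then the
basin of attraction `Σ` of `x₀` is open and invariant, and
`H(s,x) = φ(s/(1−s), x)` for `0 ≤ s < 1`, `H(1,x) = x₀` is a continuous strong
deformation retraction of `Σ` onto `{x₀}`; in particular `Σ` is contractible. -/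
theorem basin_of_attraction_contractible
    {X : Type*} [MetricSpace X]
    (φ : ℝ → X → X)
    (hφcont : Continuous fun p : ℝ × X => φ p.1 p.2)
    (hφ0 : ∀ x, φ 0 x = x)
    (hφadd : ∀ t s : ℝ, ∀ x, φ (t + s) x = φ t (φ s x))
    (x₀ : X) (heq : ∀ t : ℝ, φ t x₀ = x₀)
    (U : Set X) (hU : U ∈ nhds x₀)
    (hattr : ∀ V ∈ nhds x₀, ∃ T : ℝ, 0 ≤ T ∧ ∀ t ≥ T, ∀ x ∈ U, φ t x ∈ V)
    (Bas : Set X)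
    (hBas : Bas = {x : X | Tendsto (fun t : ℝ => φ t x) atTop (nhds x₀)})
    (H : ℝ → X → X)
    (hH₁ : ∀ s : ℝ, 0 ≤ s → s < 1 → ∀ x : X, H s x = φ (s / (1 - s)) x)
    (hH₂ : ∀ x : X, H 1 x = x₀) :
    IsOpen Bas ∧
    (∀ t : ℝ, φ t '' Bas = Bas) ∧
    ContinuousOn (fun p : ℝ × X => H p.1 p.2) (Set.Icc (0:ℝ) 1 ×ˢ Bas) ∧
    (∀ s ∈ Set.Icc (0:ℝ) 1, ∀ x ∈ Bas, H s x ∈ Bas) ∧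
    (∀ x ∈ Bas, H 0 x = x) ∧
    (∀ x ∈ Bas, H 1 x = x₀) ∧
    (∀ s ∈ Set.Icc (0:ℝ) 1, H s x₀ = x₀) ∧
    ContractibleSpace Bas := by
  let ϕ : Flow ℝ X := ⟨φ, hφcont, hφadd, hφ0⟩
  obtain rfl : Bas = ϕ.basin x₀ := hBas
  have hattr' : Tendsto (uncurry ϕ) (atTop ×ˢ 𝓟 U) (𝓝 x₀) := fun V hV => by
    obtain ⟨T, -, hT⟩ := hattr V hV
    exact mem_map.2 <| mem_of_superset (prod_mem_prod (Ici_mem_atTop T) (mem_principal_self U))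
      fun p hp => hT p.1 hp.1 p.2 hp.2
  have hUB := ϕ.subset_basin hattr'
  have hx₀ : x₀ ∈ ϕ.basin x₀ := hUB (mem_of_mem_nhds hU)
  have hH₀ : ∀ x, H 0 x = x := fun x => by simpa [hφ0] using hH₁ 0 le_rfl one_pos x
  have hmaps : ∀ s ∈ Icc (0 : ℝ) 1, ∀ x ∈ ϕ.basin x₀, H s x ∈ ϕ.basin x₀ := by
    rintro s ⟨hs₀, hs₁⟩ x hx
    rcases hs₁.lt_or_eq with hs₁ | rfl
    · rw [hH₁ s hs₀ hs₁]
      exact (Flow.map_mem_basin_iff _).2 hx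
    · rw [hH₂]
      exact hx₀
  have hcont := ϕ.continuousOn_uncurry_of_eq_div_one_sub hH₁ hH₂ fun x hx =>
    Flow.tendsto_uncurry_atTop_prod_nhds hU hattr' hx
  refine ⟨Flow.isOpen_basin hU hUB, (ϕ.isInvariant_iff_image_eq _).1 Flow.isInvariant_basin, hcont,
    hmaps, fun x _ => hH₀ x, fun x _ => hH₂ x, ?_,
    .of_continuousOn_homotopy hx₀ hcont hmaps (fun x _ => hH₀ x) fun x _ => hH₂ x⟩
  rintro s ⟨hs₀, hs₁⟩
  rcases hs₁.lt_or_eq with hs₁ | rfl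
  · rw [hH₁ s hs₀ hs₁, heq]
  · exact hH₂ x₀
end

section
/- Let X be a compact metric space and Φ : ℝ × ℝ × X → X a continuous map such that for each λ ∈ ℝ, Φ_λ := Φ(λ, ·, ·) is a flow on X. Let W ⊆ X be compact and, for each λ, set Inv_λ(W) := {x ∈ W : Φ(λ, t, x) ∈ W for all t ∈ ℝ} (the maximal invariant subset of W for Φ_λ). Suppose Inv_{λ₀}(W) is contained in the interior of W. Then for every ε > 0 there exists δ > 0 such that whenever |λ − λ₀| < δ, the set Inv_λ(W) is contained in the open ε-neighborhood of Inv_{λ₀}(W); in particular, for λ sufficiently close to λ₀, Inv_λ(W) is contained in the interior of W, i.e., W is an isolating neighborhood of Inv_λ(W) for Φ_λ. -/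
open Set Metric Filter Topology

/-! The points of `W` whose whole `Φ_l`-orbit stays in `W` form, jointly in `(l, x)`, a closed
set, because each `x ↦ Φ l t x` depends continuously on `(l, x)`. A closed-graph family of
subsets of the compact set `W` is upper semicontinuous by the tube lemma, and both conclusions
follow by applying this to the open sets `thickening ε Inv_{l₀}(W)` and `interior W`. -/

section

variable {Λ T X : Type*} [TopologicalSpace Λ] [TopologicalSpace X]

def maximalInvariantSet (f : Λ → T → X → X) (W : Set X) (l : Λ) : Set X :=
  {x ∈ W | ∀ t, f l t x ∈ W}

theorem isClosed_graph_maximalInvariantSet {f : Λ → T → X → X}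
    (hf : ∀ t, Continuous fun p : Λ × X => f p.1 t p.2) {W : Set X} (hW : IsClosed W) :
    IsClosed {p : Λ × X | p.2 ∈ maximalInvariantSet f W p.1} := by
  have hgraph : {p : Λ × X | p.2 ∈ maximalInvariantSet f W p.1} =
      Prod.snd ⁻¹' W ∩ ⋂ t, (fun p : Λ × X => f p.1 t p.2) ⁻¹' W := by
    ext p
    simp only [maximalInvariantSet, mem_ofPred_eq, mem_inter_iff, mem_preimage, mem_iInter]
  rw [hgraph]
  exact (hW.preimage continuous_snd).inter (isClosed_iInter fun t => hW.preimage (hf t))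

theorem eventually_subset_of_isClosed_graph {S : Λ → Set X} {W : Set X} (hW : IsCompact W)
    (hSW : ∀ l, S l ⊆ W) (hS : IsClosed {p : Λ × X | p.2 ∈ S p.1})
    {U : Set X} (hU : IsOpen U) {l₀ : Λ} (hl₀ : S l₀ ⊆ U) :
    ∀ᶠ l in 𝓝 l₀, S l ⊆ U := by
  have hfar : ∀ᶠ l in 𝓝 l₀, ∀ x ∈ W \ U, x ∉ S l :=
    (hW.diff hU).eventually_forall_of_forall_eventually fun x hx =>
      hS.isOpen_compl.mem_nhds fun hmem => hx.2 (hl₀ hmem)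
  filter_upwards [hfar] with l hl x hx
  by_contra hxU
  exact hl x ⟨hSW l hx, hxU⟩ hx

end

theorem maximal_invariant_set_upper_semicontinuous_general
    {X : Type*} [MetricSpace X]
    (Φ : ℝ → ℝ → X → X)
    (hΦcont : Continuous fun p : ℝ × ℝ × X => Φ p.1 p.2.1 p.2.2)
    (W : Set X) (hW : IsCompact W) (l₀ : ℝ)
    (hiso : {x ∈ W | ∀ t : ℝ, Φ l₀ t x ∈ W} ⊆ interior W) :
    (∀ ε > 0, ∃ δ > 0, ∀ l : ℝ, |l - l₀| < δ →
      {x ∈ W | ∀ t : ℝ, Φ l t x ∈ W} ⊆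
        {y : X | ∃ x ∈ {x ∈ W | ∀ t : ℝ, Φ l₀ t x ∈ W}, dist y x < ε}) ∧
    (∃ δ > 0, ∀ l : ℝ, |l - l₀| < δ →
      {x ∈ W | ∀ t : ℝ, Φ l t x ∈ W} ⊆ interior W) := by
  have hgraph : IsClosed {p : ℝ × X | p.2 ∈ maximalInvariantSet Φ W p.1} :=
    isClosed_graph_maximalInvariantSet
      (fun t => hΦcont.comp (continuous_fst.prodMk (continuous_const.prodMk continuous_snd)))
      hW.isClosed
  have hsemicont : ∀ U, IsOpen U → maximalInvariantSet Φ W l₀ ⊆ U →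
      ∃ δ > 0, ∀ l : ℝ, |l - l₀| < δ → maximalInvariantSet Φ W l ⊆ U := by
    intro U hU hl₀
    obtain ⟨δ, hδ, hball⟩ := Metric.eventually_nhds_iff.mp
      (eventually_subset_of_isClosed_graph hW (fun _ _ hx => hx.1) hgraph hU hl₀)
    exact ⟨δ, hδ, fun l hl => hball (by rwa [Real.dist_eq])⟩
  refine ⟨fun ε hε => ?_, hsemicont _ isOpen_interior hiso⟩
  have hthick : {y | ∃ x ∈ maximalInvariantSet Φ W l₀, dist y x < ε} =
      thickening ε (maximalInvariantSet Φ W l₀) := by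
    ext y
    exact mem_thickening_iff.symm
  exact hsemicont _ (hthick ▸ isOpen_thickening) fun x hx => ⟨x, hx, by rwa [dist_self]⟩

/-- Upper semicontinuity of the maximal invariant set: if `X`
is a compact metric space, `Φ` a continuous family of flows on `X`, `W ⊆ X`
compact, and the maximal invariant subset `Inv_{l₀}(W)` of `W` for `Φ_{l₀}` lies
in the interior of `W`, then for every `ε > 0` there is `δ > 0` such that for
`|l − l₀| < δ` the set `Inv_l(W)` lies in the open `ε`-neighborhood of
`Inv_{l₀}(W)`; in particular, for `l` close to `l₀`, `Inv_l(W) ⊆ interior W`,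
i.e. `W` is an isolating neighborhood for `Φ_l`. -/
theorem maximal_invariant_set_upper_semicontinuous
    {X : Type*} [MetricSpace X] [CompactSpace X]
    (Φ : ℝ → ℝ → X → X)
    (hΦcont : Continuous fun p : ℝ × ℝ × X => Φ p.1 p.2.1 p.2.2)
    (hΦ0 : ∀ l : ℝ, ∀ x : X, Φ l 0 x = x)
    (hΦadd : ∀ l t s : ℝ, ∀ x : X, Φ l (t + s) x = Φ l t (Φ l s x))
    (W : Set X) (hW : IsCompact W) (l₀ : ℝ)
    (hiso : {x ∈ W | ∀ t : ℝ, Φ l₀ t x ∈ W} ⊆ interior W) :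
    (∀ ε > 0, ∃ δ > 0, ∀ l : ℝ, |l - l₀| < δ →
      {x ∈ W | ∀ t : ℝ, Φ l t x ∈ W} ⊆
        {y : X | ∃ x ∈ {x ∈ W | ∀ t : ℝ, Φ l₀ t x ∈ W}, dist y x < ε}) ∧
    (∃ δ > 0, ∀ l : ℝ, |l - l₀| < δ →
      {x ∈ W | ∀ t : ℝ, Φ l t x ∈ W} ⊆ interior W) :=
  maximal_invariant_set_upper_semicontinuous_general Φ hΦcont W hW l₀ hiso
end

section
/- Let n ≥ 1, δ > 0, and let G : ℝⁿ → ℝⁿ be continuous with ⟨G(s), s⟩ < 0 for every s with 0 < ‖s‖ ≤ δ. If γ : ℝ → ℝⁿ is differentiable, satisfies γ′(t) = G(γ(t)) for all t ∈ ℝ, and ‖γ(t)‖ ≤ δ for all t ∈ ℝ, then γ(t) = 0 for all t ∈ ℝ. In particular, {0} is the only full bounded solution of the equation s′ = G(s) that remains in the closed δ-ball, so {0} is an isolated invariant set of the induced flow. -/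
/-!
Along a solution, `‖γ‖²` has derivative `2⟪G γ, γ⟫ ≤ 0`, so `‖γ‖` is nonincreasing. If
`γ t₀ ≠ 0`, then for `t ≤ t₀` the solution stays in the compact annulus
`‖γ t₀‖ ≤ ‖s‖ ≤ δ`, on which `⟪G s, s⟫ ≤ -m < 0` by continuity. Going backwards in time,
`‖γ t‖²` then grows at least linearly, which contradicts `‖γ t‖ ≤ δ`.
-/

open RealInnerProductSpace Set

section

variable {E : Type*} [NormedAddCommGroup E] [InnerProductSpace ℝ E]

theorem exists_inner_le_neg_on_annulus [ProperSpace E] {G : E → E} (hG_cont : Continuous G)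
    {δ r : ℝ} (hr : 0 < r) (hG : ∀ s : E, 0 < ‖s‖ → ‖s‖ ≤ δ → ⟪G s, s⟫ < 0) :
    ∃ m > 0, ∀ s : E, r ≤ ‖s‖ → ‖s‖ ≤ δ → ⟪G s, s⟫ ≤ -m := by
  set K : Set E := Metric.closedBall 0 δ \ Metric.ball 0 r
  have hK : IsCompact K := (isCompact_closedBall 0 δ).diff Metric.isOpen_ball
  have mem_K {s : E} : s ∈ K ↔ ‖s‖ ≤ δ ∧ r ≤ ‖s‖ := by simp [K]
  rcases K.eq_empty_or_nonempty with hK_empty | hK_ne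
  · refine ⟨1, one_pos, fun s hrs hsδ => ?_⟩
    exact absurd (mem_K.2 ⟨hsδ, hrs⟩) (hK_empty ▸ notMem_empty s)
  obtain ⟨s₀, hs₀, hs₀_max⟩ :=
    hK.exists_isMaxOn hK_ne
      (hG_cont.inner continuous_id : Continuous fun s : E => ⟪G s, s⟫).continuousOn
  obtain ⟨hs₀δ, hrs₀⟩ := mem_K.1 hs₀
  refine ⟨-⟪G s₀, s₀⟫, neg_pos.2 (hG s₀ (hr.trans_le hrs₀) hs₀δ), fun s hrs hsδ => ?_⟩
  rw [neg_neg]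
  exact hs₀_max (mem_K.2 ⟨hsδ, hrs⟩)

variable {G : E → E} {γ : ℝ → E}

theorem antitone_norm_of_inner_nonpos (hγ : ∀ t, HasDerivAt γ (G (γ t)) t)
    (hG : ∀ t, ⟪G (γ t), γ t⟫ ≤ 0) : Antitone (‖γ ·‖) := by
  have h_sq : Antitone (‖γ ·‖ ^ 2) := by
    refine antitone_of_hasDerivAt_nonpos (fun t => (hγ t).norm_sq) fun t => ?_
    rw [Pi.zero_apply, real_inner_comm]
    linarith [hG t]
  intro s t hst
  exact (pow_le_pow_iff_left₀ (norm_nonneg _) (norm_nonneg _) two_ne_zero).1 (h_sq hst)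

theorem norm_sq_add_le_of_inner_le_neg (hγ : ∀ t, HasDerivAt γ (G (γ t)) t) {m t₀ : ℝ}
    (hG : ∀ t ≤ t₀, ⟪G (γ t), γ t⟫ ≤ -m) {t : ℝ} (ht : t ≤ t₀) :
    ‖γ t₀‖ ^ 2 + 2 * m * (t₀ - t) ≤ ‖γ t‖ ^ 2 := by
  have hderiv (s : ℝ) : HasDerivAt (‖γ ·‖ ^ 2) (2 * ⟪G (γ s), γ s⟫) s := by
    simpa only [real_inner_comm] using (hγ s).norm_sq
  have h_mvt := (convex_Iic t₀).image_sub_le_mul_sub_of_deriv_le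
    (fun s _ => (hderiv s).continuousAt.continuousWithinAt)
    (fun s _ => (hderiv s).differentiableAt.differentiableWithinAt)
    (C := -2 * m) (fun s hs => by
      rw [(hderiv s).deriv]
      linarith [hG s (interior_subset (s := Iic t₀) hs)])
    t ht t₀ self_mem_Iic ht
  linarith

end

theorem trivial_solution_only_bounded_full_solution_general
    (n : ℕ) (δ : ℝ)
    (G : EuclideanSpace ℝ (Fin n) → EuclideanSpace ℝ (Fin n))
    (hGcont : Continuous G)
    (hG : ∀ s : EuclideanSpace ℝ (Fin n), 0 < ‖s‖ → ‖s‖ ≤ δ → ⟪G s, s⟫ < 0)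
    (γ : ℝ → EuclideanSpace ℝ (Fin n))
    (hγ : ∀ t : ℝ, HasDerivAt γ (G (γ t)) t)
    (hbdd : ∀ t : ℝ, ‖γ t‖ ≤ δ) :
    ∀ t : ℝ, γ t = 0 := by
  intro t₀
  by_contra hγt₀
  have h_nonpos (t : ℝ) : ⟪G (γ t), γ t⟫ ≤ 0 := by
    rcases eq_or_ne (γ t) 0 with h | h
    · simp [h]
    · exact (hG _ (norm_pos_iff.2 h) (hbdd t)).le
  have h_anti := antitone_norm_of_inner_nonpos hγ h_nonpos
  obtain ⟨m, hm, hGm⟩ := exists_inner_le_neg_on_annulus hGcont (norm_pos_iff.2 hγt₀) hG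
  set t₁ := t₀ - (δ ^ 2 + 1) / (2 * m)
  have h_grow : ‖γ t₀‖ ^ 2 + 2 * m * (t₀ - t₁) ≤ ‖γ t₁‖ ^ 2 :=
    norm_sq_add_le_of_inner_le_neg hγ (fun t ht => hGm _ (h_anti ht) (hbdd t))
      (sub_le_self _ (by positivity))
  rw [sub_sub_cancel, mul_div_cancel₀ _ (by positivity)] at h_grow
  have h_bdd_sq : ‖γ t₁‖ ^ 2 ≤ δ ^ 2 := pow_le_pow_left₀ (norm_nonneg _) (hbdd t₁) 2
  linarith [sq_nonneg ‖γ t₀‖]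

/-- If `G` is continuous with `⟪G(s), s⟫ < 0` for
`0 < ‖s‖ ≤ δ`, then any full solution `γ` of `s' = G(s)` that stays in the
closed `δ`-ball is identically `0`; hence `{0}` is an isolated invariant set. -/
theorem trivial_solution_only_bounded_full_solution
    (n : ℕ) (hn : 1 ≤ n) (δ : ℝ) (hδ : 0 < δ)
    (G : EuclideanSpace ℝ (Fin n) → EuclideanSpace ℝ (Fin n))
    (hGcont : Continuous G)
    (hG : ∀ s : EuclideanSpace ℝ (Fin n), 0 < ‖s‖ → ‖s‖ ≤ δ → ⟪G s, s⟫ < 0)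
    (γ : ℝ → EuclideanSpace ℝ (Fin n))
    (hγ : ∀ t : ℝ, HasDerivAt γ (G (γ t)) t)
    (hbdd : ∀ t : ℝ, ‖γ t‖ ≤ δ) :
    ∀ t : ℝ, γ t = 0 :=
  trivial_solution_only_bounded_full_solution_general n δ G hGcont hG γ hγ hbdd
end

section
/- For s₁, s₂ ∈ ℝ define ψ(x) = (1/2432)·( s₁³·sin 2x·cos 4x − s₂³·cos 2x·cos 4x + 3 s₁² s₂·cos 2x·cos 4x − 3 s₁ s₂²·sin 2x·cos 4x ). Then for all x, s₁, s₂ ∈ ℝ: ψ⁗(x) + 2ψ″(x) − 8ψ(x) + (s₁ sin 2x + s₂ cos 2x)³ = (3/4)(s₁² + s₂²)(s₁ sin 2x + s₂ cos 2x); that is, with L_{λ₀}u = u⁗ + 2u″ + u − 9u, the function ψ satisfies L_{λ₀}ψ = −(s₁ sin 2x + s₂ cos 2x)³ + (3/4)(s₁² + s₂²)(s₁ sin 2x + s₂ cos 2x) exactly. -/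
/-!
Both sides are trigonometric polynomials in `θ = 2x`. By the product-to-sum formulas `ψ` is a
combination of the modes `sin θ, cos θ` and `sin 3θ, cos 3θ`, and the cubic term is, by the
triple-angle formulas, `(3/4)(s₁² + s₂²)(s₁ sin θ + s₂ cos θ)` plus a `3θ`-mode. The operator
`u ↦ u⁗ + 2u″ − 8u` multiplies the mode of frequency `k` by `k⁴ − 2k² − 8`, which vanishes for
`k = 2` (the kernel of `L_{λ₀}`) and equals `1216 = 2432 / 2` for `k = 6`; this is exactly what
cancels the `3θ`-mode of the cube.
-/

open Real

noncomputable def trigMode (k a b x : ℝ) : ℝ := a * sin (k * x) + b * cos (k * x)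

theorem hasDerivAt_trigMode (k a b x : ℝ) :
    HasDerivAt (trigMode k a b) (trigMode k (-(k * b)) (k * a) x) x := by
  have hlin : HasDerivAt (fun x => k * x) k x := by
    simpa using (hasDerivAt_id x).const_mul k
  have hsin := ((hasDerivAt_sin (k * x)).comp x hlin).const_mul a
  have hcos := ((hasDerivAt_cos (k * x)).comp x hlin).const_mul b
  have hderiv :
      a * (cos (k * x) * k) + b * (-sin (k * x) * k) = trigMode k (-(k * b)) (k * a) x := by
    rw [trigMode]
    ring
  exact hderiv ▸ hsin.add hcos

theorem deriv_trigMode_add (k a b m c d : ℝ) :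
    deriv (trigMode k a b + trigMode m c d)
      = trigMode k (-(k * b)) (k * a) + trigMode m (-(m * d)) (m * c) :=
  funext fun x => ((hasDerivAt_trigMode k a b x).add (hasDerivAt_trigMode m c d x)).deriv

theorem sin_mul_cos_two_mul (θ : ℝ) : sin θ * cos (2 * θ) = (sin (3 * θ) - sin θ) / 2 := by
  have h := two_mul_sin_mul_cos θ (2 * θ)
  rw [show θ - 2 * θ = -θ by ring, show θ + 2 * θ = 3 * θ by ring, sin_neg] at h
  linarith

theorem cos_mul_cos_two_mul (θ : ℝ) : cos θ * cos (2 * θ) = (cos (3 * θ) + cos θ) / 2 := by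
  have h := two_mul_cos_mul_cos θ (2 * θ)
  rw [show θ - 2 * θ = -θ by ring, show θ + 2 * θ = 3 * θ by ring, cos_neg] at h
  linarith

theorem sin_add_cos_pow_three (s₁ s₂ θ : ℝ) :
    (s₁ * sin θ + s₂ * cos θ) ^ 3
      = 3 / 4 * (s₁ ^ 2 + s₂ ^ 2) * (s₁ * sin θ + s₂ * cos θ)
        - ((s₁ ^ 3 - 3 * s₁ * s₂ ^ 2) * sin (3 * θ)
          + (3 * s₁ ^ 2 * s₂ - s₂ ^ 3) * cos (3 * θ)) / 4 := by
  rw [sin_three_mul, cos_three_mul]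
  linear_combination 3 * s₁ * s₂ * (s₁ * cos θ + s₂ * sin θ) * sin_sq_add_cos_sq θ

/-- With
`ψ(x) = (1/2432)(s₁³ sin 2x cos 4x − s₂³ cos 2x cos 4x + 3s₁²s₂ cos 2x cos 4x − 3s₁s₂² sin 2x cos 4x)`,
one has exactly
`ψ⁗ + 2ψ″ − 8ψ + (s₁ sin 2x + s₂ cos 2x)³ = (3/4)(s₁² + s₂²)(s₁ sin 2x + s₂ cos 2x)`,
i.e. `L_{λ₀} ψ = −(s₁ sin 2x + s₂ cos 2x)³ + (3/4)(s₁² + s₂²)(s₁ sin 2x + s₂ cos 2x)`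
where `L_{λ₀} u = u⁗ + 2u″ + u − 9u`. -/
theorem center_manifold_equation_exact (s₁ s₂ : ℝ) :
    ∀ ψ : ℝ → ℝ,
      (ψ = fun x => (1 / 2432) *
        (s₁ ^ 3 * (Real.sin (2 * x) * Real.cos (4 * x))
          - s₂ ^ 3 * (Real.cos (2 * x) * Real.cos (4 * x))
          + 3 * s₁ ^ 2 * s₂ * (Real.cos (2 * x) * Real.cos (4 * x))
          - 3 * s₁ * s₂ ^ 2 * (Real.sin (2 * x) * Real.cos (4 * x)))) →
      ∀ x : ℝ,
        deriv (deriv (deriv (deriv ψ))) x + 2 * deriv (deriv ψ) x - 8 * ψ x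
            + (s₁ * Real.sin (2 * x) + s₂ * Real.cos (2 * x)) ^ 3
          = 3 / 4 * (s₁ ^ 2 + s₂ ^ 2)
              * (s₁ * Real.sin (2 * x) + s₂ * Real.cos (2 * x)) := by
  intro ψ hψ x
  set A := s₁ ^ 3 - 3 * s₁ * s₂ ^ 2
  set B := 3 * s₁ ^ 2 * s₂ - s₂ ^ 3
  have hmodes : ψ = trigMode 2 (-(A / 4864)) (B / 4864) + trigMode 6 (A / 4864) (B / 4864) := by
    funext y
    have h4 : 4 * y = 2 * (2 * y) := by ring
    have h6 : 6 * y = 3 * (2 * y) := by ring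
    simp only [hψ, Pi.add_apply, trigMode]
    rw [h4, h6, sin_mul_cos_two_mul, cos_mul_cos_two_mul]
    ring
  rw [hmodes, deriv_trigMode_add, deriv_trigMode_add, deriv_trigMode_add, deriv_trigMode_add,
    sin_add_cos_pow_three]
  simp only [Pi.add_apply, trigMode, show (6 : ℝ) * x = 3 * (2 * x) by ring]
  ring
end

section
/- Let u : ℝ → ℝ be twice continuously differentiable and π-periodic with ∫₀^π u(x) dx = 0. Then ∫₀^π (u(x) + u″(x))² dx ≥ 9·∫₀^π u(x)² dx. -/
/-!
On an interval of length `π` the Fourier modes are `e^{2inx}`, so integrating by parts twice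
(the boundary terms cancel by periodicity) shows that the `n`-th coefficient of `u + u″` is
`(1 - 4n²)` times that of `u`. The mean condition kills the coefficient `n = 0`, and
`(1 - 4n²)² ≥ 9` for `n ≠ 0`; Parseval's identity turns this coefficientwise bound into the
integral inequality.
-/

open Real intervalIntegral Complex MeasureTheory Set
open scoped Interval

section FourierCoeffOn

variable {a b : ℝ}

theorem ContinuousOn.memLp_restrict_Ioc {E : Type*} [NormedAddCommGroup E] {f : ℝ → E}
    (hf : ContinuousOn f [[a, b]]) (p : ENNReal) : MemLp f p (volume.restrict (Ioc a b)) := by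
  have hsub : Ioc a b ⊆ [[a, b]] := Ioc_subset_Icc_self.trans Icc_subset_uIcc
  obtain ⟨C, hC⟩ := isCompact_uIcc.exists_bound_of_continuousOn hf
  refine .of_bound ((hf.mono hsub).aestronglyMeasurable measurableSet_Ioc) C ?_
  exact ae_restrict_of_forall_mem measurableSet_Ioc fun x hx => hC x (hsub hx)

variable (hab : a < b)

theorem fourierCoeffOn_add {f g : ℝ → ℂ} (hf : IntervalIntegrable f volume a b)
    (hg : IntervalIntegrable g volume a b) (n : ℤ) :
    fourierCoeffOn hab (f + g) n = fourierCoeffOn hab f n + fourierCoeffOn hab g n := by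
  have hcont : ContinuousOn (fun x : ℝ => fourier (-n) (x : AddCircle (b - a))) [[a, b]] :=
    ((map_continuous _).comp (AddCircle.continuous_mk' _)).continuousOn
  simp only [fourierCoeffOn_eq_integral, Pi.add_apply, smul_add]
  rw [integral_add (hf.continuousOn_smul hcont) (hg.continuousOn_smul hcont), smul_add]

theorem fourierCoeffOn_deriv_of_hasDerivAt_of_eq {f f' : ℝ → ℂ}
    (hf : ∀ x ∈ [[a, b]], HasDerivAt f (f' x) x) (hf' : IntervalIntegrable f' volume a b)
    (hfab : f a = f b) (n : ℤ) :
    fourierCoeffOn hab f' n = 2 * π * I * n / (b - a) * fourierCoeffOn hab f n := by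
  rcases eq_or_ne n 0 with rfl | hn
  · rw [fourierCoeffOn_eq_integral]
    simp only [neg_zero, fourier_zero, one_smul, Int.cast_zero, mul_zero, zero_div, zero_mul]
    rw [integral_eq_sub_of_hasDerivAt hf hf', hfab, sub_self, smul_zero]
  · rw [fourierCoeffOn_of_hasDerivAt hab hn hf hf', hfab, sub_self, mul_zero, zero_sub]
    have hba : (b - a : ℂ) ≠ 0 := by exact_mod_cast (sub_pos.2 hab).ne'
    field_simp

theorem fourierCoeffOn_add_second_deriv {f f' f'' : ℝ → ℂ}
    (hf : ∀ x ∈ [[a, b]], HasDerivAt f (f' x) x) (hf' : ∀ x ∈ [[a, b]], HasDerivAt f' (f'' x) x)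
    (hf'' : IntervalIntegrable f'' volume a b) (hfab : f a = f b) (hf'ab : f' a = f' b) (n : ℤ) :
    fourierCoeffOn hab (f + f'') n = (1 - (2 * π * n / (b - a)) ^ 2) * fourierCoeffOn hab f n := by
  have hfi : IntervalIntegrable f volume a b :=
    (HasDerivAt.continuousOn hf).intervalIntegrable
  have hf'i : IntervalIntegrable f' volume a b :=
    (HasDerivAt.continuousOn hf').intervalIntegrable
  rw [fourierCoeffOn_add hab hfi hf'' n,
    fourierCoeffOn_deriv_of_hasDerivAt_of_eq hab hf' hf'' hf'ab,
    fourierCoeffOn_deriv_of_hasDerivAt_of_eq hab hf hf'i hfab]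
  ring_nf
  rw [I_sq]
  ring

theorem mul_integral_norm_sq_le_of_fourierCoeffOn {f g : ℝ → ℂ}
    (hf : MemLp f 2 (volume.restrict (Ioc a b))) (hg : MemLp g 2 (volume.restrict (Ioc a b)))
    {c : ℝ} (h : ∀ n, c * ‖fourierCoeffOn hab f n‖ ^ 2 ≤ ‖fourierCoeffOn hab g n‖ ^ 2) :
    c * ∫ x in a..b, ‖f x‖ ^ 2 ≤ ∫ x in a..b, ‖g x‖ ^ 2 := by
  have hsum := hasSum_le h ((hasSum_sq_fourierCoeffOn hab hf).mul_left c)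
    (hasSum_sq_fourierCoeffOn hab hg)
  rw [smul_eq_mul, smul_eq_mul, mul_left_comm] at hsum
  exact le_of_mul_le_mul_left hsum (inv_pos.2 (sub_pos.2 hab))

end FourierCoeffOn

theorem Function.Periodic.deriv {𝕜 F : Type*} [NontriviallyNormedField 𝕜] [NormedAddCommGroup F]
    [NormedSpace 𝕜 F] {f : 𝕜 → F} {c : 𝕜} (hf : Function.Periodic f c) :
    Function.Periodic (deriv f) c := fun x => by
  rw [← deriv_comp_add_const, show (fun y => f (y + c)) = f from funext hf]

theorem nine_le_one_sub_four_mul_sq {n : ℤ} (hn : n ≠ 0) : 9 ≤ (1 - 4 * (n : ℝ) ^ 2) ^ 2 := by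
  have hn2 : (1 : ℝ) ≤ (n : ℝ) ^ 2 := by
    rw [one_le_sq_iff_one_le_abs]
    exact_mod_cast Int.one_le_abs hn
  nlinarith

theorem nine_mul_integral_norm_sq_le_integral_norm_add_second_deriv_sq {a b : ℝ} (hba : b - a = π)
    {f f' f'' : ℝ → ℂ}
    (hf : ∀ x ∈ [[a, b]], HasDerivAt f (f' x) x) (hf' : ∀ x ∈ [[a, b]], HasDerivAt f' (f'' x) x)
    (hf'' : ContinuousOn f'' [[a, b]]) (hfab : f a = f b) (hf'ab : f' a = f' b)
    (hmean : ∫ x in a..b, f x = 0) :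
    9 * ∫ x in a..b, ‖f x‖ ^ 2 ≤ ∫ x in a..b, ‖f x + f'' x‖ ^ 2 := by
  have hab : a < b := by linarith [pi_pos]
  have hfc : ContinuousOn f [[a, b]] := HasDerivAt.continuousOn hf
  have hcoeff := fourierCoeffOn_add_second_deriv hab hf hf' hf''.intervalIntegrable hfab hf'ab
  have hzero : fourierCoeffOn hab f 0 = 0 := by
    simp [fourierCoeffOn_eq_integral, hmean]
  refine mul_integral_norm_sq_le_of_fourierCoeffOn hab (hfc.memLp_restrict_Ioc 2)
    ((hfc.add hf'').memLp_restrict_Ioc 2) fun n => ?_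
  rcases eq_or_ne n 0 with rfl | hn
  · simp [hzero]
  · have hba' : (b : ℂ) - a = π := by exact_mod_cast hba
    have hmult : (1 - (2 * π * n / π) ^ 2 : ℂ) = ((1 - 4 * (n : ℝ) ^ 2 : ℝ) : ℂ) := by
      push_cast
      field_simp
      ring
    rw [hcoeff, hba', hmult, norm_mul, mul_pow, norm_real, Real.norm_eq_abs, sq_abs]
    exact mul_le_mul_of_nonneg_right (nine_le_one_sub_four_mul_sq hn) (sq_nonneg _)

/-- Spectral lower bound for `(I + Δ)²` on zero-mean
`π`-periodic functions: if `u` is `C²`, `π`-periodic and `∫₀^π u = 0`, then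
`∫₀^π (u + u″)² ≥ 9 ∫₀^π u²`. -/
theorem spectral_lower_bound_swift_hohenberg
    (u : ℝ → ℝ) (hu : ContDiff ℝ 2 u)
    (hper : ∀ x : ℝ, u (x + Real.pi) = u x)
    (hmean : (∫ x in (0:ℝ)..Real.pi, u x) = 0) :
    (∫ x in (0:ℝ)..Real.pi, (u x + deriv (deriv u) x) ^ 2)
      ≥ 9 * ∫ x in (0:ℝ)..Real.pi, (u x) ^ 2 := by
  have hu' : ∀ x, HasDerivAt u (deriv u x) x := fun x =>
    (hu.differentiable (by norm_num) x).hasDerivAt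
  have hu1 : ContDiff ℝ 1 (deriv u) := hu.deriv'
  have hu'' : ∀ x, HasDerivAt (deriv u) (deriv (deriv u) x) x := fun x =>
    (hu1.differentiable one_ne_zero x).hasDerivAt
  have key := nine_mul_integral_norm_sq_le_integral_norm_add_second_deriv_sq (sub_zero π)
    (f := fun x => (u x : ℂ)) (fun x _ => (hu' x).ofReal_comp) (fun x _ => (hu'' x).ofReal_comp)
    (continuous_ofReal.comp (hu1.continuous_deriv le_rfl)).continuousOn
    (by simpa using congrArg ofReal (hper 0).symm)
    (by simpa using congrArg ofReal ((show Function.Periodic u π from hper).deriv 0).symm)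
    (by rw [intervalIntegral.integral_ofReal, hmean, ofReal_zero])
  simp only [← ofReal_add, norm_real, Real.norm_eq_abs, sq_abs] at key
  exact key
end
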